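/- arXiv:1307.0204 — 2 statements merged into one kernel-verified Lean document; each statement's English description precedes it below -/
import Mathlib

section
/- Let M : k → n and N : n → m be P/T nets with boundaries, and let X, X' ∈ Multiset(P_M) and Y, Y' ∈ Multiset(P_N) be markings. Then (M;N)_{X+Y} =α/β⇒ (M;N)_{X'+Y'} under the weak labelled semantics if and only if there exists γ ∈ ℕ^n such that M_X =α/γ⇒ M_{X'} and N_Y =γ/β⇒ N_{Y'}. -/
/-- A P/T net with boundaries `m → n` (well-formedness in `PTNet.Valid`). -/
structure PTNet (m n : ℕ) : Type 1 where
  P : Type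
  T : Type
  pre : T → Multiset P
  post : T → Multiset P
  src : T → Multiset (Fin m)
  tgt : T → Multiset (Fin n)

namespace PTNet

variable {k l m n : ℕ}

/-- Linear extension of `pre` to multisets of transitions. -/
def preM (N : PTNet m n) (U : Multiset N.T) : Multiset N.P := (U.map N.pre).sum
def postM (N : PTNet m n) (U : Multiset N.T) : Multiset N.P := (U.map N.post).sum
def srcM (N : PTNet m n) (U : Multiset N.T) : Multiset (Fin m) := (U.map N.src).sum
def tgtM (N : PTNet m n) (U : Multiset N.T) : Multiset (Fin n) := (U.map N.tgt).sum

/-- Well-formedness: finiteness and distinct footprints. -/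
def Valid (N : PTNet m n) : Prop :=
  Finite N.P ∧ Finite N.T ∧
  ∀ t u : N.T, N.pre t = N.pre u → N.post t = N.post u →
    N.src t = N.src u → N.tgt t = N.tgt u → t = u

/-- Strong firing of P/T nets: `N_X →_U N_Y`. -/
def SFire (N : PTNet m n) (X : Multiset N.P) (U : Multiset N.T)
    (Y : Multiset N.P) : Prop :=
  letI := Classical.decEq N.P
  N.preM U ≤ X ∧ N.postM U ≤ Y ∧ X - N.preM U = Y - N.postM U

/-- Weak (banking) firing of P/T nets: `N_X ⇒_U N_Y`. -/
def WFire (N : PTNet m n) (X : Multiset N.P) (U : Multiset N.T)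
    (Y : Multiset N.P) : Prop :=
  Y + N.preM U = X + N.postM U

/-- Characteristic function `χ : Multiset (Fin k) → ℕ^k`. -/
def chiM {k : ℕ} (M : Multiset (Fin k)) : Fin k → ℕ := fun i => M.count i

/-- Strong labelled semantics of P/T nets with boundaries. -/
def SLts (N : PTNet m n) (X : Multiset N.P) (α : Fin m → ℕ) (β : Fin n → ℕ)
    (Y : Multiset N.P) : Prop :=
  ∃ U : Multiset N.T, N.SFire X U Y ∧ α = chiM (N.srcM U) ∧ β = chiM (N.tgtM U)

/-- Weak labelled semantics of P/T nets with boundaries. -/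
def WLts (N : PTNet m n) (X : Multiset N.P) (α : Fin m → ℕ) (β : Fin n → ℕ)
    (Y : Multiset N.P) : Prop :=
  ∃ U : Multiset N.T, N.WFire X U Y ∧ α = chiM (N.srcM U) ∧ β = chiM (N.tgtM U)

/-- Synchronisation between P/T nets with a common boundary. -/
def Synch (M : PTNet l m) (N : PTNet m n) (U : Multiset M.T)
    (V : Multiset N.T) : Prop :=
  ¬(U = 0 ∧ V = 0) ∧ M.tgtM U = N.srcM V

/-- Minimal synchronisation. -/
def MinSynch (M : PTNet l m) (N : PTNet m n) (U : Multiset M.T)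
    (V : Multiset N.T) : Prop :=
  Synch M N U V ∧
    ∀ U' V', Synch M N U' V' → U' ≤ U → V' ≤ V → U' = U ∧ V' = V

end PTNet
namespace PTNet

variable {k l m n : ℕ}

/-- Footprints of transitions of the composite P/T net. -/
def FootprintPT (M : PTNet l m) (N : PTNet m n) : Type :=
  Multiset (M.P ⊕ N.P) × Multiset (M.P ⊕ N.P) × Multiset (Fin l) × Multiset (Fin n)

def footOf (M : PTNet l m) (N : PTNet m n) (U : Multiset M.T) (V : Multiset N.T) :
    FootprintPT M N :=
  ((M.preM U).map Sum.inl + (N.preM V).map Sum.inr,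
   (M.postM U).map Sum.inl + (N.postM V).map Sum.inr,
   M.srcM U, N.tgtM V)

/-- Combined marking on a disjoint union of places. -/
def mmk {A B : Type} (X : Multiset A) (Y : Multiset B) : Multiset (A ⊕ B) :=
  X.map Sum.inl + Y.map Sum.inr

/-- Composition of P/T nets with boundaries along a common boundary. -/
def comp (M : PTNet l m) (N : PTNet m n) : PTNet l n where
  P := M.P ⊕ N.P
  T := {fp : FootprintPT M N // ∃ U V, MinSynch M N U V ∧ footOf M N U V = fp}
  pre t := t.1.1
  post t := t.1.2.1
  src t := t.1.2.2.1
  tgt t := t.1.2.2.2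

end PTNet

/-!
A step of `M;N` is a multiset of minimal synchronisations, so it amounts to a pair of steps
`U` of `M` and `V` of `N` that agree on the shared boundary, `tgt U = src V`: conversely, every
such balanced pair is a sum of minimal synchronisations, obtained by repeatedly removing a
minimal one below it. Since places of `M;N` are the disjoint union of those of `M` and `N`,
the banking firing equation of `M;N` holds iff it holds on each side, and the common boundary
label is `γ = χ(tgt U)`.
-/

namespace PTNet

variable {k l m n : ℕ}

section Linearity

variable (N : PTNet m n) (U V : Multiset N.T)

@[simp] lemma srcM_zero : N.srcM 0 = 0 := Multiset.sum_zero
@[simp] lemma tgtM_zero : N.tgtM 0 = 0 := Multiset.sum_zero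

@[simp] lemma preM_add : N.preM (U + V) = N.preM U + N.preM V := by simp [preM]
@[simp] lemma postM_add : N.postM (U + V) = N.postM U + N.postM V := by simp [postM]
@[simp] lemma srcM_add : N.srcM (U + V) = N.srcM U + N.srcM V := by simp [srcM]
@[simp] lemma tgtM_add : N.tgtM (U + V) = N.tgtM U + N.tgtM V := by simp [tgtM]

@[simp] lemma preM_singleton (t : N.T) : N.preM {t} = N.pre t := by simp [preM]
@[simp] lemma postM_singleton (t : N.T) : N.postM {t} = N.post t := by simp [postM]
@[simp] lemma srcM_singleton (t : N.T) : N.srcM {t} = N.src t := by simp [srcM]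
@[simp] lemma tgtM_singleton (t : N.T) : N.tgtM {t} = N.tgt t := by simp [tgtM]

end Linearity

lemma chiM_injective : Function.Injective (chiM (k := k)) :=
  fun _ _ h => Multiset.ext.2 (congrFun h)

section Marking

variable {A B : Type}

lemma mmk_add (X X' : Multiset A) (Y Y' : Multiset B) :
    mmk (X + X') (Y + Y') = mmk X Y + mmk X' Y' := by
  simp only [mmk, Multiset.map_add]
  abel

lemma mmk_inj {X X' : Multiset A} {Y Y' : Multiset B} :
    mmk X Y = mmk X' Y' ↔ X = X' ∧ Y = Y' := by
  classical
  refine ⟨fun h => ⟨?_, ?_⟩, fun ⟨hX, hY⟩ => hX ▸ hY ▸ rfl⟩ <;> ext a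
  · simpa [mmk, Multiset.count_map_eq_count' _ _ Sum.inl_injective] using
      congrArg (Multiset.count (Sum.inl a)) h
  · simpa [mmk, Multiset.count_map_eq_count' _ _ Sum.inr_injective] using
      congrArg (Multiset.count (Sum.inr a)) h

end Marking

section Composition

variable (M : PTNet l m) (N : PTNet m n)

def SplitsInto (W : Multiset (M.comp N).T) (U : Multiset M.T) (V : Multiset N.T) : Prop :=
  (M.comp N).preM W = mmk (M.preM U) (N.preM V) ∧
    (M.comp N).postM W = mmk (M.postM U) (N.postM V) ∧
    (M.comp N).srcM W = M.srcM U ∧ (M.comp N).tgtM W = N.tgtM V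

variable {M N}

lemma exists_minSynch_le {p : Multiset M.T × Multiset N.T} (h : Synch M N p.1 p.2) :
    ∃ q ≤ p, MinSynch M N q.1 q.2 := by
  obtain ⟨q, hqp, hsynch, hmin⟩ :=
    exists_minimal_le_of_wellFoundedLT (fun p => Synch M N p.1 p.2) p h
  refine ⟨q, hqp, hsynch, fun U V h' hU hV => ?_⟩
  have hge := hmin (y := (U, V)) h' ⟨hU, hV⟩
  exact ⟨le_antisymm hU hge.1, le_antisymm hV hge.2⟩

lemma splitsInto_zero : SplitsInto M N 0 0 0 := ⟨rfl, rfl, rfl, rfl⟩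

lemma SplitsInto.add {W W' : Multiset (M.comp N).T} {U U' : Multiset M.T}
    {V V' : Multiset N.T} (h : SplitsInto M N W U V) (h' : SplitsInto M N W' U' V') :
    SplitsInto M N (W + W') (U + U') (V + V') := by
  obtain ⟨hpre, hpost, hsrc, htgt⟩ := h
  obtain ⟨hpre', hpost', hsrc', htgt'⟩ := h'
  refine ⟨?_, ?_, ?_, ?_⟩ <;>
    simp only [preM_add, postM_add, srcM_add, tgtM_add, mmk_add, *] <;> rfl

lemma splitsInto_singleton {t : (M.comp N).T} {U : Multiset M.T} {V : Multiset N.T}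
    (h : footOf M N U V = t.1) : SplitsInto M N {t} U V := by
  simp only [SplitsInto, preM_singleton, postM_singleton, srcM_singleton, tgtM_singleton]
  exact ⟨congrArg (·.1) h.symm, congrArg (·.2.1) h.symm, congrArg (·.2.2.1) h.symm,
    congrArg (·.2.2.2) h.symm⟩

lemma exists_splitsInto (W : Multiset (M.comp N).T) :
    ∃ U V, M.tgtM U = N.srcM V ∧ SplitsInto M N W U V := by
  induction W using Multiset.induction with
  | empty => exact ⟨0, 0, by simp, splitsInto_zero⟩
  | cons t W ih =>
    obtain ⟨U, V, hbal, hW⟩ := ih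
    obtain ⟨U₀, V₀, hmin, hfoot⟩ := t.2
    refine ⟨U₀ + U, V₀ + V, by simp [hbal, hmin.1.2], ?_⟩
    rw [← Multiset.singleton_add]
    exact (splitsInto_singleton hfoot).add hW

lemma exists_splitsInto_of_tgtM_eq_srcM (p : Multiset M.T × Multiset N.T)
    (hbal : M.tgtM p.1 = N.srcM p.2) : ∃ W, SplitsInto M N W p.1 p.2 := by
  induction p using WellFoundedLT.induction with
  | ind p ih =>
    by_cases hp : p = 0
    · subst hp
      exact ⟨0, splitsInto_zero⟩
    obtain ⟨q, hqp, hmin⟩ := exists_minSynch_le ⟨by simpa [Prod.ext_iff] using hp, hbal⟩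
    obtain ⟨r, rfl⟩ := exists_add_of_le hqp
    have hq : q ≠ 0 := by simpa [Prod.ext_iff] using hmin.1.1
    have hbal' : M.tgtM r.1 = N.srcM r.2 := by simpa [hmin.1.2] using hbal
    obtain ⟨W, hW⟩ := ih r (lt_add_of_pos_left r (pos_iff_ne_zero.2 hq)) hbal'
    let t : (M.comp N).T := ⟨footOf M N q.1 q.2, q.1, q.2, hmin, rfl⟩
    exact ⟨{t} + W, (splitsInto_singleton (t := t) rfl).add hW⟩

lemma SplitsInto.wFire_iff {W : Multiset (M.comp N).T} {U : Multiset M.T}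
    {V : Multiset N.T} (h : SplitsInto M N W U V) {X X' : Multiset M.P} {Y Y' : Multiset N.P} :
    (M.comp N).WFire (mmk X Y) W (mmk X' Y') ↔ M.WFire X U X' ∧ N.WFire Y V Y' := by
  obtain ⟨hpre, hpost, -, -⟩ := h
  change mmk X' Y' + _ = mmk X Y + _ ↔ _
  rw [hpre, hpost, ← mmk_add, ← mmk_add, mmk_inj]
  rfl

end Composition

end PTNet

theorem stmt6_general {k n m : ℕ} (M : PTNet k n) (N : PTNet n m)
    (X X' : Multiset M.P) (Y Y' : Multiset N.P)
    (α : Fin k → ℕ) (β : Fin m → ℕ) :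
    (M.comp N).WLts (PTNet.mmk X Y) α β (PTNet.mmk X' Y') ↔
      ∃ γ : Fin n → ℕ, M.WLts X α γ X' ∧ N.WLts Y γ β Y' := by
  constructor
  · rintro ⟨W, hfire, rfl, rfl⟩
    obtain ⟨U, V, hbal, hW⟩ := PTNet.exists_splitsInto W
    obtain ⟨hfireM, hfireN⟩ := hW.wFire_iff.1 hfire
    exact ⟨PTNet.chiM (M.tgtM U), ⟨U, hfireM, by rw [hW.2.2.1], rfl⟩,
      ⟨V, hfireN, by rw [hbal], by rw [hW.2.2.2]⟩⟩
  · rintro ⟨γ, ⟨U, hfireM, rfl, rfl⟩, ⟨V, hfireN, hγ, rfl⟩⟩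
    obtain ⟨W, hW⟩ :=
      PTNet.exists_splitsInto_of_tgtM_eq_srcM (U, V) (PTNet.chiM_injective hγ)
    exact ⟨W, hW.wFire_iff.2 ⟨hfireM, hfireN⟩, by rw [hW.2.2.1], by rw [hW.2.2.2]⟩

/-- Theorem `ptnetdecomposition` (ii): the weak (banking)
labelled semantics of the composite P/T net `M;N` decomposes. -/
theorem stmt6 {k n m : ℕ} (M : PTNet k n) (N : PTNet n m)
    (hM : M.Valid) (hN : N.Valid)
    (X X' : Multiset M.P) (Y Y' : Multiset N.P)
    (α : Fin k → ℕ) (β : Fin m → ℕ) :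
    (M.comp N).WLts (PTNet.mmk X Y) α β (PTNet.mmk X' Y') ↔
      ∃ γ : Fin n → ℕ, M.WLts X α γ X' ∧ N.WLts Y γ β Y' :=
  stmt6_general M N X X' Y Y' α β
end

section
/- Both strong bisimilarity ∼ and weak bisimilarity ≈ of Petri calculus terms are congruences with respect to ';' and '⊗': for ⋈ ∈ {∼, ≈}, if P ⋈ Q then for any term R of appropriate sort, P;R ⋈ Q;R, R;P ⋈ R;Q, P⊗R ⋈ Q⊗R and R⊗P ⋈ R⊗Q. -/
/-- Syntax of the Petri calculus. -/
inductive PTerm : Type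
  | empty               -- ○ (empty one-place buffer)
  | full                -- ● (full one-place buffer)
  | iden                -- I
  | tw                  -- X
  | diag                -- Δ
  | codiag              -- ∇
  | bot                 -- ⊥
  | top                 -- ⊤
  | lam                 -- Λ
  | vee                 -- V
  | down                -- ↓
  | up                  -- ↑
  | tens (P Q : PTerm)  -- ⊗
  | seq (P Q : PTerm)   -- ;
  deriving DecidableEq

namespace PTerm

/-- Sorting discipline of the Petri calculus. -/
inductive HasSort : PTerm → ℕ → ℕ → Prop
  | empty : HasSort .empty 1 1
  | full : HasSort .full 1 1
  | iden : HasSort .iden 1 1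
  | tw : HasSort .tw 2 2
  | diag : HasSort .diag 1 2
  | codiag : HasSort .codiag 2 1
  | bot : HasSort .bot 1 0
  | top : HasSort .top 0 1
  | lam : HasSort .lam 1 2
  | vee : HasSort .vee 2 1
  | down : HasSort .down 1 0
  | up : HasSort .up 0 1
  | tens {P Q : PTerm} {k l m n : ℕ} :
      HasSort P k l → HasSort Q m n → HasSort (.tens P Q) (k + m) (l + n)
  | seq {P Q : PTerm} {k n l : ℕ} :
      HasSort P k n → HasSort Q n l → HasSort (.seq P Q) k l

/-- Basic connectors are the constants of the calculus. -/
def IsBasic : PTerm → Prop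
  | .tens _ _ => False
  | .seq _ _ => False
  | _ => True

/-- Stateless terms contain no buffers ○, ●. -/
def Stateless : PTerm → Prop
  | .empty => False
  | .full => False
  | .tens P Q => Stateless P ∧ Stateless Q
  | .seq P Q => Stateless P ∧ Stateless Q
  | _ => True

/-- Strong operational semantics of the Petri calculus.  Labels are words
over ℕ (the rules only produce entries in {0,1}). -/
inductive Step : PTerm → List ℕ → List ℕ → PTerm → Prop
  | tkI : Step .empty [1] [0] .full
  | tkO : Step .full [0] [1] .empty
  | iden : Step .iden [1] [1] .iden
  | tw {a b : ℕ} : a ≤ 1 → b ≤ 1 → Step .tw [a, b] [b, a] .tw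
  | bot : Step .bot [1] [] .bot
  | top : Step .top [] [1] .top
  | diag : Step .diag [1] [1, 1] .diag
  | codiag : Step .codiag [1, 1] [1] .codiag
  | lam {a : ℕ} : a ≤ 1 → Step .lam [1] [1 - a, a] .lam
  | vee {a : ℕ} : a ≤ 1 → Step .vee [1 - a, a] [1] .vee
  | refl {C : PTerm} {k l : ℕ} : IsBasic C → HasSort C k l →
      Step C (List.replicate k 0) (List.replicate l 0) C
  | cut {P Q R S : PTerm} {α β γ : List ℕ} :
      Step P α γ Q → Step R γ β S → Step (.seq P R) α β (.seq Q S)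
  | ten {P Q R S : PTerm} {α₁ α₂ β₁ β₂ : List ℕ} :
      Step P α₁ β₁ Q → Step R α₂ β₂ S →
      Step (.tens P R) (α₁ ++ α₂) (β₁ ++ β₂) (.tens Q S)

/-- Weak operational semantics of the Petri calculus: the same rules plus the
rule (Weak) composing consecutive steps by pointwise addition of labels. -/
inductive Weak : PTerm → List ℕ → List ℕ → PTerm → Prop
  | tkI : Weak .empty [1] [0] .full
  | tkO : Weak .full [0] [1] .empty
  | iden : Weak .iden [1] [1] .iden
  | tw {a b : ℕ} : a ≤ 1 → b ≤ 1 → Weak .tw [a, b] [b, a] .tw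
  | bot : Weak .bot [1] [] .bot
  | top : Weak .top [] [1] .top
  | diag : Weak .diag [1] [1, 1] .diag
  | codiag : Weak .codiag [1, 1] [1] .codiag
  | lam {a : ℕ} : a ≤ 1 → Weak .lam [1] [1 - a, a] .lam
  | vee {a : ℕ} : a ≤ 1 → Weak .vee [1 - a, a] [1] .vee
  | refl {C : PTerm} {k l : ℕ} : IsBasic C → HasSort C k l →
      Weak C (List.replicate k 0) (List.replicate l 0) C
  | cut {P Q R S : PTerm} {α β γ : List ℕ} :
      Weak P α γ Q → Weak R γ β S → Weak (.seq P R) α β (.seq Q S)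
  | ten {P Q R S : PTerm} {α₁ α₂ β₁ β₂ : List ℕ} :
      Weak P α₁ β₁ Q → Weak R α₂ β₂ S →
      Weak (.tens P R) (α₁ ++ α₂) (β₁ ++ β₂) (.tens Q S)
  | weak {P R Q : PTerm} {α₁ α₂ β₁ β₂ : List ℕ} :
      Weak P α₁ β₁ R → Weak R α₂ β₂ Q →
      Weak P (List.zipWith (· + ·) α₁ α₂) (List.zipWith (· + ·) β₁ β₂) Q

end PTerm
/-- A bisimulation for a two-labelled transition system. -/
def IsBisimulation {S : Type*} {L : Type*} (tr : S → L → S → Prop)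
    (R : S → S → Prop) : Prop :=
  ∀ p q, R p q →
    (∀ a p', tr p a p' → ∃ q', tr q a q' ∧ R p' q') ∧
    (∀ a q', tr q a q' → ∃ p', tr p a p' ∧ R p' q')

/-- Bisimilarity: two states are bisimilar when some bisimulation relates them. -/
def Bisimilar {S : Type*} {L : Type*} (tr : S → L → S → Prop) (p q : S) : Prop :=
  ∃ R, IsBisimulation tr R ∧ R p q
/-- Strong transition relation of the Petri calculus, packaged with paired labels. -/
def pcStrongTr : PTerm → List ℕ × List ℕ → PTerm → Prop :=
  fun P a Q => PTerm.Step P a.1 a.2 Q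

/-- Weak transition relation of the Petri calculus, packaged with paired labels. -/
def pcWeakTr : PTerm → List ℕ × List ℕ → PTerm → Prop :=
  fun P a Q => PTerm.Weak P a.1 a.2 Q

/-- Strong bisimilarity `∼` of Petri calculus terms. -/
def SBisim (P Q : PTerm) : Prop := Bisimilar pcStrongTr P Q

/-- Weak bisimilarity `≈` of Petri calculus terms. -/
def WBisim (P Q : PTerm) : Prop := Bisimilar pcWeakTr P Q

/-! A context whose transitions are exactly those of its hole, combined by a side condition on
the context, maps a bisimulation to a bisimulation. Sequential and parallel composition are
such contexts: a transition of `P ; R` is a transition of `P` followed by one of `R` along a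
shared middle label, and a transition of `P ⊗ R` is a pair of transitions of `P` and `R`.
For the weak semantics the latter needs the sort of the left factor: the rule (Weak) adds
labels pointwise, which commutes with `++` only when the first blocks have equal length. -/

theorem Bisimilar.congr_context {S X L : Type*} {tr : S → L → S → Prop}
    (ctx : X → S → S) (I : X → S → Prop) (K : X → L → L → X → Prop)
    (hdecomp : ∀ {x p a t}, I x p → tr (ctx x p) a t →
      ∃ b p' x', tr p b p' ∧ K x b a x' ∧ t = ctx x' p')
    (hcomp : ∀ {x p b p' a x'}, tr p b p' → K x b a x' → tr (ctx x p) a (ctx x' p'))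
    (hinvariant : ∀ {x p b p' a x'}, I x p → tr p b p' → K x b a x' → I x' p')
    {p q : S} (hpq : Bisimilar tr p q) {x : X} (hp : I x p) (hq : I x q) :
    Bisimilar tr (ctx x p) (ctx x q) := by
  obtain ⟨R, hR, hpq⟩ := hpq
  refine ⟨fun u v => ∃ x p q, R p q ∧ I x p ∧ I x q ∧ u = ctx x p ∧ v = ctx x q, ?_,
    x, p, q, hpq, hp, hq, rfl, rfl⟩
  rintro _ _ ⟨x, p, q, hpq, hp, hq, rfl, rfl⟩
  constructor
  · intro a t ht
    obtain ⟨b, p', x', hp', hK, rfl⟩ := hdecomp hp ht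
    obtain ⟨q', hq', hpq'⟩ := (hR p q hpq).1 b p' hp'
    exact ⟨_, hcomp hq' hK, x', p', q', hpq', hinvariant hp hp' hK, hinvariant hq hq' hK,
      rfl, rfl⟩
  · intro a t ht
    obtain ⟨b, q', x', hq', hK, rfl⟩ := hdecomp hq ht
    obtain ⟨p', hp', hpq'⟩ := (hR p q hpq).2 b q' hq'
    exact ⟨_, hcomp hp' hK, x', p', q', hpq', hinvariant hp hp' hK, hinvariant hq hq' hK,
      rfl, rfl⟩

namespace PTerm

theorem HasSort.unique {P : PTerm} {k l k' l' : ℕ} (h : HasSort P k l)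
    (h' : HasSort P k' l') : k = k' ∧ l = l' := by
  induction h generalizing k' l' with
  | tens _ _ ih₁ ih₂ =>
    cases h' with
    | tens h₁ h₂ => obtain ⟨rfl, rfl⟩ := ih₁ h₁; obtain ⟨rfl, rfl⟩ := ih₂ h₂; simp
  | seq _ _ ih₁ ih₂ =>
    cases h' with
    | seq h₁ h₂ => obtain ⟨rfl, rfl⟩ := ih₁ h₁; exact ⟨rfl, (ih₂ h₂).2⟩
  | _ => cases h'; simp

theorem Step.toWeak {P Q : PTerm} {α β : List ℕ} (h : Step P α β Q) : Weak P α β Q := by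
  induction h with
  | cut _ _ ih₁ ih₂ => exact .cut ih₁ ih₂
  | ten _ _ ih₁ ih₂ => exact .ten ih₁ ih₂
  | _ => constructor <;> assumption

theorem Weak.hasSort {P Q : PTerm} {α β : List ℕ} {k l : ℕ} (h : Weak P α β Q)
    (hP : HasSort P k l) : α.length = k ∧ β.length = l ∧ HasSort Q k l := by
  induction h generalizing k l with
  | refl _ hC => obtain ⟨rfl, rfl⟩ := hC.unique hP; simpa using hC
  | cut _ _ ih₁ ih₂ =>
    cases hP with
    | seq h₁ h₂ =>
      obtain ⟨hα, -, hQ⟩ := ih₁ h₁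
      obtain ⟨-, hβ, hS⟩ := ih₂ h₂
      exact ⟨hα, hβ, hQ.seq hS⟩
  | ten _ _ ih₁ ih₂ =>
    cases hP with
    | tens h₁ h₂ =>
      obtain ⟨hα₁, hβ₁, hQ⟩ := ih₁ h₁
      obtain ⟨hα₂, hβ₂, hS⟩ := ih₂ h₂
      simp [hα₁, hβ₁, hα₂, hβ₂, hQ.tens hS]
  | weak _ _ ih₁ ih₂ =>
    obtain ⟨hα₁, hβ₁, hR⟩ := ih₁ hP
    obtain ⟨hα₂, hβ₂, hQ⟩ := ih₂ hR
    simp [hα₁, hβ₁, hα₂, hβ₂, hQ]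
  | _ => cases hP; exact ⟨rfl, rfl, by constructor⟩

theorem Step.seq_inv {P R X : PTerm} {α β : List ℕ} (h : Step (seq P R) α β X) :
    ∃ γ Q S, Step P α γ Q ∧ Step R γ β S ∧ X = seq Q S := by
  cases h with
  | refl hb _ => exact hb.elim
  | cut h₁ h₂ => exact ⟨_, _, _, h₁, h₂, rfl⟩

theorem Step.tens_inv {P R X : PTerm} {α β : List ℕ} (h : Step (tens P R) α β X) :
    ∃ α₁ α₂ β₁ β₂ Q S, Step P α₁ β₁ Q ∧ Step R α₂ β₂ S ∧
      α = α₁ ++ α₂ ∧ β = β₁ ++ β₂ ∧ X = tens Q S := by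
  cases h with
  | refl hb _ => exact hb.elim
  | ten h₁ h₂ => exact ⟨_, _, _, _, _, _, h₁, h₂, rfl, rfl, rfl⟩

theorem Weak.seq_inv {P R X : PTerm} {α β : List ℕ} (h : Weak (seq P R) α β X) :
    ∃ γ Q S, Weak P α γ Q ∧ Weak R γ β S ∧ X = seq Q S := by
  generalize hY : seq P R = Y at h
  induction h generalizing P R with
  | cut h₁ h₂ => cases hY; exact ⟨_, _, _, h₁, h₂, rfl⟩
  | weak _ _ ih₁ ih₂ =>
    obtain ⟨γ₁, Q₁, S₁, hP₁, hR₁, rfl⟩ := ih₁ hY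
    obtain ⟨γ₂, Q₂, S₂, hP₂, hR₂, rfl⟩ := ih₂ rfl
    exact ⟨_, _, _, hP₁.weak hP₂, hR₁.weak hR₂, rfl⟩
  | refl hb _ => subst hY; exact hb.elim
  | _ => cases hY

theorem Weak.tens_inv {P R X : PTerm} {α β : List ℕ} {k l : ℕ} (hP : HasSort P k l)
    (h : Weak (tens P R) α β X) :
    ∃ α₁ α₂ β₁ β₂ Q S, Weak P α₁ β₁ Q ∧ Weak R α₂ β₂ S ∧
      α = α₁ ++ α₂ ∧ β = β₁ ++ β₂ ∧ X = tens Q S := by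
  generalize hY : tens P R = Y at h
  induction h generalizing P R with
  | ten h₁ h₂ => cases hY; exact ⟨_, _, _, _, _, _, h₁, h₂, rfl, rfl, rfl⟩
  | weak _ _ ih₁ ih₂ =>
    obtain ⟨α₁, α₂, β₁, β₂, Q₁, S₁, hP₁, hR₁, rfl, rfl, rfl⟩ := ih₁ hP hY
    obtain ⟨hα₁, hβ₁, hQ₁⟩ := hP₁.hasSort hP
    obtain ⟨α₁', α₂', β₁', β₂', Q₂, S₂, hP₂, hR₂, rfl, rfl, rfl⟩ := ih₂ hQ₁ rfl
    obtain ⟨hα₁', hβ₁', -⟩ := hP₂.hasSort hQ₁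
    refine ⟨_, _, _, _, _, _, hP₁.weak hP₂, hR₁.weak hR₂, ?_, ?_, rfl⟩ <;>
      exact List.zipWith_append (by omega)
  | refl hb _ => subst hY; exact hb.elim
  | _ => cases hY

section Congruence

variable {tr : PTerm → List ℕ × List ℕ → PTerm → Prop}

theorem bisimilar_seq_right
    (hcut : ∀ {P Q R S α β γ}, tr P (α, γ) Q → tr R (γ, β) S →
      tr (seq P R) (α, β) (seq Q S))
    (hinv : ∀ {P R X α β}, tr (seq P R) (α, β) X →
      ∃ γ Q S, tr P (α, γ) Q ∧ tr R (γ, β) S ∧ X = seq Q S)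
    {P Q : PTerm} (h : Bisimilar tr P Q) (R : PTerm) : Bisimilar tr (seq P R) (seq Q R) :=
  Bisimilar.congr_context (fun R P => seq P R) (fun _ _ => True)
    (fun R b a R' => b.1 = a.1 ∧ tr R (b.2, a.2) R')
    (fun _ ht => let ⟨γ, _, _, hP, hR, hX⟩ := hinv ht
      ⟨(_, γ), _, _, hP, ⟨rfl, hR⟩, hX⟩)
    (fun hP ⟨hα, hR⟩ => hcut (hα ▸ hP) hR) (fun _ _ _ => trivial) h trivial trivial

theorem bisimilar_seq_left
    (hcut : ∀ {P Q R S α β γ}, tr P (α, γ) Q → tr R (γ, β) S →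
      tr (seq P R) (α, β) (seq Q S))
    (hinv : ∀ {P R X α β}, tr (seq P R) (α, β) X →
      ∃ γ Q S, tr P (α, γ) Q ∧ tr R (γ, β) S ∧ X = seq Q S)
    {P Q : PTerm} (h : Bisimilar tr P Q) (R : PTerm) : Bisimilar tr (seq R P) (seq R Q) :=
  Bisimilar.congr_context (fun R P => seq R P) (fun _ _ => True)
    (fun R b a R' => b.2 = a.2 ∧ tr R (a.1, b.1) R')
    (fun _ ht => let ⟨γ, _, _, hR, hP, hX⟩ := hinv ht
      ⟨(γ, _), _, _, hP, ⟨rfl, hR⟩, hX⟩)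
    (fun hP ⟨hβ, hR⟩ => hcut hR (hβ ▸ hP)) (fun _ _ _ => trivial) h trivial trivial

theorem bisimilar_tens_right
    (hten : ∀ {P Q R S α₁ α₂ β₁ β₂}, tr P (α₁, β₁) Q → tr R (α₂, β₂) S →
      tr (tens P R) (α₁ ++ α₂, β₁ ++ β₂) (tens Q S))
    (hinv : ∀ {P R X α β k l}, HasSort P k l → tr (tens P R) (α, β) X →
      ∃ α₁ α₂ β₁ β₂ Q S, tr P (α₁, β₁) Q ∧ tr R (α₂, β₂) S ∧
        α = α₁ ++ α₂ ∧ β = β₁ ++ β₂ ∧ X = tens Q S)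
    (hsort : ∀ {P Q a k l}, HasSort P k l → tr P a Q → HasSort Q k l)
    {P Q : PTerm} {k l : ℕ} (hP : HasSort P k l) (hQ : HasSort Q k l)
    (h : Bisimilar tr P Q) (R : PTerm) : Bisimilar tr (tens P R) (tens Q R) :=
  Bisimilar.congr_context (fun R P => tens P R) (fun _ P => HasSort P k l)
    (fun R b a R' => ∃ α₂ β₂, tr R (α₂, β₂) R' ∧ a = (b.1 ++ α₂, b.2 ++ β₂))
    (fun hP ht => let ⟨_, α₂, _, β₂, _, _, hP', hR, hα, hβ, hX⟩ := hinv hP ht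
      ⟨_, _, _, hP', ⟨α₂, β₂, hR, Prod.ext hα hβ⟩, hX⟩)
    (fun hP ⟨_, _, hR, ha⟩ => ha ▸ hten hP hR) (fun hP hP' _ => hsort hP hP') h hP hQ

theorem bisimilar_tens_left
    (hten : ∀ {P Q R S α₁ α₂ β₁ β₂}, tr P (α₁, β₁) Q → tr R (α₂, β₂) S →
      tr (tens P R) (α₁ ++ α₂, β₁ ++ β₂) (tens Q S))
    (hinv : ∀ {P R X α β k l}, HasSort P k l → tr (tens P R) (α, β) X →
      ∃ α₁ α₂ β₁ β₂ Q S, tr P (α₁, β₁) Q ∧ tr R (α₂, β₂) S ∧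
        α = α₁ ++ α₂ ∧ β = β₁ ++ β₂ ∧ X = tens Q S)
    (hsort : ∀ {P Q a k l}, HasSort P k l → tr P a Q → HasSort Q k l)
    {P Q R : PTerm} {m n : ℕ} (hR : HasSort R m n) (h : Bisimilar tr P Q) :
    Bisimilar tr (tens R P) (tens R Q) :=
  Bisimilar.congr_context (fun R P => tens R P) (fun R _ => HasSort R m n)
    (fun R b a R' => ∃ α₁ β₁, tr R (α₁, β₁) R' ∧ a = (α₁ ++ b.1, β₁ ++ b.2))
    (fun hR ht => let ⟨α₁, _, β₁, _, _, _, hR', hP, hα, hβ, hX⟩ := hinv hR ht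
      ⟨_, _, _, hP, ⟨α₁, β₁, hR', Prod.ext hα hβ⟩, hX⟩)
    (fun hP ⟨_, _, hR, ha⟩ => ha ▸ hten hR hP) (fun hR _ ⟨_, _, hR', _⟩ => hsort hR hR')
    h hR hR

end Congruence

end PTerm

/-- Proposition `petricongruence`: both strong and weak
bisimilarity of Petri calculus terms are congruences w.r.t. `;` and `⊗`. -/
theorem stmt10 (P Q : PTerm) (k l : ℕ)
    (hP : PTerm.HasSort P k l) (hQ : PTerm.HasSort Q k l) :
    (SBisim P Q →
       (∀ (R : PTerm) (m : ℕ), PTerm.HasSort R l m →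
          SBisim (.seq P R) (.seq Q R)) ∧
       (∀ (R : PTerm) (m : ℕ), PTerm.HasSort R m k →
          SBisim (.seq R P) (.seq R Q)) ∧
       (∀ (R : PTerm) (m n : ℕ), PTerm.HasSort R m n →
          SBisim (.tens P R) (.tens Q R) ∧ SBisim (.tens R P) (.tens R Q))) ∧
    (WBisim P Q →
       (∀ (R : PTerm) (m : ℕ), PTerm.HasSort R l m →
          WBisim (.seq P R) (.seq Q R)) ∧
       (∀ (R : PTerm) (m : ℕ), PTerm.HasSort R m k →
          WBisim (.seq R P) (.seq R Q)) ∧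
       (∀ (R : PTerm) (m n : ℕ), PTerm.HasSort R m n →
          WBisim (.tens P R) (.tens Q R) ∧ WBisim (.tens R P) (.tens R Q))) := by
  open PTerm in
  have hstrong_sort {P Q : PTerm} {a : List ℕ × List ℕ} {k l : ℕ} (hP : HasSort P k l)
      (h : pcStrongTr P a Q) : HasSort Q k l :=
    ((Step.toWeak h).hasSort hP).2.2
  have hweak_sort {P Q : PTerm} {a : List ℕ × List ℕ} {k l : ℕ} (hP : HasSort P k l)
      (h : pcWeakTr P a Q) : HasSort Q k l :=
    (Weak.hasSort h hP).2.2
  refine ⟨fun h => ⟨fun R _ _ => ?_, fun R _ _ => ?_, fun R _ _ hR => ⟨?_, ?_⟩⟩,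
    fun h => ⟨fun R _ _ => ?_, fun R _ _ => ?_, fun R _ _ hR => ⟨?_, ?_⟩⟩⟩
  · exact bisimilar_seq_right Step.cut Step.seq_inv h R
  · exact bisimilar_seq_left Step.cut Step.seq_inv h R
  · exact bisimilar_tens_right Step.ten (fun _ => Step.tens_inv) hstrong_sort hP hQ h R
  · exact bisimilar_tens_left Step.ten (fun _ => Step.tens_inv) hstrong_sort hR h
  · exact bisimilar_seq_right Weak.cut Weak.seq_inv h R
  · exact bisimilar_seq_left Weak.cut Weak.seq_inv h R
  · exact bisimilar_tens_right Weak.ten Weak.tens_inv hweak_sort hP hQ h R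
  · exact bisimilar_tens_left Weak.ten Weak.tens_inv hweak_sort hR h
end
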